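/- arXiv:2211.07808 — 3 statements merged into one kernel-verified Lean document; each statement's English description precedes it below -/
import Mathlib

section
/- Let K:ℝᴺ∖{0}→ℝ be a kernel that is homogeneous of degree −N and satisfies |K(x)|≤C₁|x|^{−N}. Let f∈C^{0,μ}(ℝᴺ) (0<μ<1) be bounded and Hölder, and let ω∈L∞(ℝᴺ) have support of finite Lebesgue measure, m(supp ω)=m(B₁)Lᴺ. Then for every R>0, the function G(x)=∫_{ℝᴺ}K(x−y)(f(x)−f(y))ω(y)dy satisfies |G(x)| ≤ C₀‖ω‖_{L∞}(|f|_μ R^μ + ‖f‖_{L∞} log(1+L/R)) for all x, where C₀ depends only on μ, N, and C₁, and |f|_μ denotes the μ-Hölder seminorm of f. -/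
open MeasureTheory Real Set Filter Topology

private lemma log_lb {u : ℝ} (hu : 0 ≤ u) : u / (1 + u) ≤ Real.log (1 + u) := by
  have h1 : (0:ℝ) < 1 + u := by linarith
  have h2 := Real.log_le_sub_one_of_pos (x := (1 + u)⁻¹) (by positivity)
  rw [Real.log_inv] at h2
  have h3 : 1 - (1 + u)⁻¹ ≤ Real.log (1 + u) := by linarith
  have h4 : u / (1 + u) = 1 - (1 + u)⁻¹ := by field_simp; ring
  linarith

private lemma layer {N : ℕ} (x : EuclideanSpace ℝ (Fin N))
    {A : Set (EuclideanSpace ℝ (Fin N))} (hA : MeasurableSet A) (p : ℝ) :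
    ∫⁻ y in A, ENNReal.ofReal (‖x - y‖ ^ p) =
      ∫⁻ t in Set.Ioi (0:ℝ), volume ({y | t < ‖x - y‖ ^ p} ∩ A) := by
  have hm : Measurable fun y : EuclideanSpace ℝ (Fin N) => ‖x - y‖ ^ p :=
    (measurable_const.sub measurable_id).norm.pow measurable_const
  rw [lintegral_eq_lintegral_meas_lt _
    (Eventually.of_forall fun y => Real.rpow_nonneg (norm_nonneg _) _) hm.aemeasurable]
  refine setLIntegral_congr_fun measurableSet_Ioi (fun t ht => ?_)
  rw [Measure.restrict_apply (measurableSet_lt measurable_const hm)]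

private lemma tail_subset {N : ℕ} (x : EuclideanSpace ℝ (Fin N)) {p t : ℝ}
    (hp : 0 < p) (ht : 0 < t) :
    {y : EuclideanSpace ℝ (Fin N) | t < ‖x - y‖ ^ (-p)} ⊆ Metric.ball x (t ^ (-(1/p))) := by
  intro y hy
  simp only [mem_setOf_eq] at hy
  have hz : 0 < ‖x - y‖ := by
    rcases (norm_nonneg (x - y)).eq_or_lt with h | h
    · rw [← h, Real.zero_rpow (by simpa using hp.ne')] at hy; linarith
    · exact h
  have h2 := Real.rpow_lt_rpow_of_neg ht hy (by simpa using (one_div_pos.2 hp) : -(1/p) < 0)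
  rw [← Real.rpow_mul hz.le] at h2
  rw [show (-p) * (-(1/p)) = 1 by field_simp] at h2
  rw [Real.rpow_one] at h2
  rw [Metric.mem_ball, dist_eq_norm, ← norm_sub_rev]
  exact h2

private lemma tail_meas {N : ℕ} (x : EuclideanSpace ℝ (Fin N)) {p t : ℝ}
    (hp : 0 < p) (ht : 0 < t) :
    volume {y : EuclideanSpace ℝ (Fin N) | t < ‖x - y‖ ^ (-p)} ≤
      ENNReal.ofReal (t ^ (-((N:ℝ)/p))) *
        volume (Metric.ball (0 : EuclideanSpace ℝ (Fin N)) 1) := by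
  calc volume {y : EuclideanSpace ℝ (Fin N) | t < ‖x - y‖ ^ (-p)}
      ≤ volume (Metric.ball x (t ^ (-(1/p)))) := measure_mono (tail_subset x hp ht)
    _ = ENNReal.ofReal ((t ^ (-(1/p))) ^ N) *
        volume (Metric.ball (0 : EuclideanSpace ℝ (Fin N)) 1) := by
        rw [Measure.addHaar_ball_of_pos volume x (Real.rpow_pos_of_pos ht _),
          finrank_euclideanSpace_fin]
    _ = ENNReal.ofReal (t ^ (-((N:ℝ)/p))) *
        volume (Metric.ball (0 : EuclideanSpace ℝ (Fin N)) 1) := by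
        rw [← Real.rpow_natCast (t ^ (-(1/p))) N, ← Real.rpow_mul ht.le,
          show (-(1/p)) * (N:ℝ) = -((N:ℝ)/p) by ring]

private lemma near_bound {N : ℕ} (hN : 1 ≤ N) {μ R : ℝ} (hμ0 : 0 < μ) (hμ1 : μ < 1)
    (hR : 0 < R) (x : EuclideanSpace ℝ (Fin N)) :
    ∫⁻ y in Metric.ball x R, ENNReal.ofReal (‖x - y‖ ^ (μ - (N:ℝ))) ≤
      volume (Metric.ball (0 : EuclideanSpace ℝ (Fin N)) 1) *
        ENNReal.ofReal (((N:ℝ) / μ) * R ^ μ) := by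
  set v := volume (Metric.ball (0 : EuclideanSpace ℝ (Fin N)) 1) with hv
  have hN1 : (1:ℝ) ≤ (N:ℝ) := by exact_mod_cast hN
  set p : ℝ := (N:ℝ) - μ with hpdef
  have hp : 0 < p := by simp only [hpdef]; linarith
  have hpN : p < (N:ℝ) := by simp only [hpdef]; linarith
  have hexp : μ - (N:ℝ) = -p := by simp only [hpdef]; ring
  rw [hexp, layer x measurableSet_ball (-p)]
  set a : ℝ := R ^ (-p) with hadef
  have ha : 0 < a := Real.rpow_pos_of_pos hR _
  rw [← Ioc_union_Ioi_eq_Ioi ha.le,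
    lintegral_union measurableSet_Ioi (Ioc_disjoint_Ioi le_rfl)]
  have hvne : v ≠ ⊤ := measure_ball_lt_top.ne
  have h1 : ∫⁻ t in Ioc 0 a, volume ({y | t < ‖x - y‖ ^ (-p)} ∩ Metric.ball x R) ≤
      v * ENNReal.ofReal (R ^ μ) := by
    calc ∫⁻ t in Ioc 0 a, volume ({y | t < ‖x - y‖ ^ (-p)} ∩ Metric.ball x R)
        ≤ ∫⁻ _ in Ioc 0 a, volume (Metric.ball x R) :=
          lintegral_mono fun t => measure_mono inter_subset_right
      _ = volume (Metric.ball x R) * volume (Ioc (0:ℝ) a) := setLIntegral_const _ _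
      _ = (ENNReal.ofReal (R ^ N) * v) * ENNReal.ofReal a := by
          rw [Measure.addHaar_ball_of_pos volume x hR, finrank_euclideanSpace_fin,
            Real.volume_Ioc, sub_zero]
      _ = v * (ENNReal.ofReal (R ^ N) * ENNReal.ofReal a) := by ring
      _ = v * ENNReal.ofReal (R ^ μ) := by
          rw [← ENNReal.ofReal_mul (by positivity), ← Real.rpow_natCast R N,
            ← Real.rpow_add hR, show (N:ℝ) + -p = μ by simp only [hpdef]; ring]
  have he : -((N:ℝ)/p) < -1 := by
    have : 1 < (N:ℝ)/p := (one_lt_div hp).2 hpN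
    linarith
  have h2 : ∫⁻ t in Ioi a, volume ({y | t < ‖x - y‖ ^ (-p)} ∩ Metric.ball x R) ≤
      v * ENNReal.ofReal ((p / μ) * R ^ μ) := by
    have hb : ∀ t ∈ Ioi a, volume ({y | t < ‖x - y‖ ^ (-p)} ∩ Metric.ball x R) ≤
        ENNReal.ofReal (t ^ (-((N:ℝ)/p))) * v := by
      intro t ht
      have ht0 : 0 < t := ha.trans ht
      exact (measure_mono inter_subset_left).trans (tail_meas x hp ht0)
    calc ∫⁻ t in Ioi a, volume ({y | t < ‖x - y‖ ^ (-p)} ∩ Metric.ball x R)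
        ≤ ∫⁻ t in Ioi a, ENNReal.ofReal (t ^ (-((N:ℝ)/p))) * v :=
          lintegral_mono_ae ((ae_restrict_iff' measurableSet_Ioi).2 (Eventually.of_forall hb))
      _ = (∫⁻ t in Ioi a, ENNReal.ofReal (t ^ (-((N:ℝ)/p)))) * v :=
          lintegral_mul_const' v _ hvne
      _ = ENNReal.ofReal (∫ t in Ioi a, t ^ (-((N:ℝ)/p))) * v := by
          rw [ofReal_integral_eq_lintegral_ofReal (integrableOn_Ioi_rpow_of_lt he ha)
            ((ae_restrict_iff' measurableSet_Ioi).2 (Eventually.of_forall fun t ht =>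
              Real.rpow_nonneg (ha.trans ht).le _))]
      _ = ENNReal.ofReal ((p / μ) * R ^ μ) * v := by
          rw [integral_Ioi_rpow_of_lt he ha]
          congr 1
          have hae : a ^ (-((N:ℝ)/p) + 1) = R ^ μ := by
            rw [hadef, ← Real.rpow_mul hR.le,
              show (-p) * (-((N:ℝ)/p) + 1) = μ by field_simp; simp only [hpdef]; ring]
          rw [hae]
          have hne : -((N:ℝ)/p) + 1 = -(μ/p) := by field_simp; simp only [hpdef]; ring
          rw [hne]
          field_simp
      _ = v * ENNReal.ofReal ((p / μ) * R ^ μ) := mul_comm _ _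
  calc _ ≤ v * ENNReal.ofReal (R ^ μ) + v * ENNReal.ofReal ((p / μ) * R ^ μ) :=
        add_le_add h1 h2
    _ = v * ENNReal.ofReal (R ^ μ + (p / μ) * R ^ μ) := by
        rw [← mul_add, ENNReal.ofReal_add (by positivity) (by positivity)]
    _ = v * ENNReal.ofReal (((N:ℝ) / μ) * R ^ μ) := by
        congr 2
        field_simp
        simp only [hpdef]; ring

private lemma far_bound {N : ℕ} (hN : 1 ≤ N) {R L : ℝ} (hR : 0 < R) (hL : 0 ≤ L)
    (x : EuclideanSpace ℝ (Fin N)) {S : Set (EuclideanSpace ℝ (Fin N))}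
    (hS : MeasurableSet S) (hfar : ∀ y ∈ S, R ≤ ‖x - y‖)
    (hvol : volume S ≤ volume (Metric.ball (0 : EuclideanSpace ℝ (Fin N)) 1) *
      ENNReal.ofReal (L ^ N)) :
    ∫⁻ y in S, ENNReal.ofReal (‖x - y‖ ^ (-(N:ℝ))) ≤
      volume (Metric.ball (0 : EuclideanSpace ℝ (Fin N)) 1) *
        ENNReal.ofReal (((N:ℝ) + 2) * Real.log (1 + L / R)) := by
  set v := volume (Metric.ball (0 : EuclideanSpace ℝ (Fin N)) 1) with hv
  have hN1 : (1:ℝ) ≤ (N:ℝ) := by exact_mod_cast hN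
  have hNpos : (0:ℝ) < (N:ℝ) := by linarith
  have hlog : 0 ≤ Real.log (1 + L / R) := Real.log_nonneg (by
    have : 0 ≤ L / R := div_nonneg hL hR.le
    linarith)
  rw [layer x hS (-(N:ℝ))]
  set c₂ : ℝ := R ^ (-(N:ℝ)) with hc₂def
  have hc₂ : 0 < c₂ := Real.rpow_pos_of_pos hR _
  rw [← Ioc_union_Ioi_eq_Ioi hc₂.le,
    lintegral_union measurableSet_Ioi (Ioc_disjoint_Ioi le_rfl)]
  have hvne : v ≠ ⊤ := measure_ball_lt_top.ne
  have hzero : ∫⁻ t in Ioi c₂, volume ({y | t < ‖x - y‖ ^ (-(N:ℝ))} ∩ S) = 0 := by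
    refine le_antisymm ?_ zero_le
    have : ∀ t ∈ Ioi c₂, volume ({y | t < ‖x - y‖ ^ (-(N:ℝ))} ∩ S) ≤ 0 := by
      intro t ht
      have : {y | t < ‖x - y‖ ^ (-(N:ℝ))} ∩ S = ∅ := by
        ext y
        simp only [mem_inter_iff, mem_setOf_eq, mem_empty_iff_false, iff_false, not_and]
        intro hy hyS
        have h1 : ‖x - y‖ ^ (-(N:ℝ)) ≤ c₂ :=
          Real.rpow_le_rpow_of_nonpos hR (hfar y hyS) (by simp [hNpos.le])
        have h2 : c₂ < t := ht
        linarith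
      rw [this, measure_empty]
    calc ∫⁻ t in Ioi c₂, volume ({y | t < ‖x - y‖ ^ (-(N:ℝ))} ∩ S)
        ≤ ∫⁻ _ in Ioi c₂, 0 :=
          lintegral_mono_ae ((ae_restrict_iff' measurableSet_Ioi).2 (Eventually.of_forall this))
      _ = 0 := by simp
  rw [hzero, add_zero]
  rcases le_or_gt L R with hLR | hLR
  · -- L ≤ R : trivial bound
    have hreal : L ^ N * c₂ ≤ ((N:ℝ) + 2) * Real.log (1 + L / R) := by
      have hc₂eq : c₂ = (R ^ N)⁻¹ := by
        rw [hc₂def, Real.rpow_neg hR.le, Real.rpow_natCast]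
      have hLRc : L ^ N * c₂ = (L / R) ^ N := by
        rw [hc₂eq, div_pow]; ring
      rw [hLRc]
      set u : ℝ := L / R with hu
      have hu0 : 0 ≤ u := div_nonneg hL hR.le
      have hu1 : u ≤ 1 := (div_le_one hR).2 hLR
      have h1 : u ^ N ≤ u := pow_le_of_le_one hu0 hu1 (by omega)
      have h2 := log_lb hu0
      have h4 : u * (1 + u) ≤ ((N:ℝ)+2) * u := by
        nlinarith [mul_le_mul_of_nonneg_left hu1 hu0,
          mul_nonneg (le_trans zero_le_one hN1) hu0]
      have h5 : u ≤ ((N:ℝ)+2) * (u/(1+u)) := by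
        rw [← mul_div_assoc, le_div_iff₀ (by linarith : (0:ℝ) < 1 + u)]
        linarith
      have h6 : ((N:ℝ)+2) * (u/(1+u)) ≤ ((N:ℝ)+2) * Real.log (1+u) :=
        mul_le_mul_of_nonneg_left h2 (by linarith)
      linarith
    calc ∫⁻ t in Ioc 0 c₂, volume ({y | t < ‖x - y‖ ^ (-(N:ℝ))} ∩ S)
        ≤ ∫⁻ _ in Ioc 0 c₂, v * ENNReal.ofReal (L ^ N) :=
          lintegral_mono fun t => (measure_mono inter_subset_right).trans hvol
      _ = v * ENNReal.ofReal (L ^ N) * ENNReal.ofReal c₂ := by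
          rw [setLIntegral_const, Real.volume_Ioc, sub_zero]
      _ = v * ENNReal.ofReal (L ^ N * c₂) := by
          rw [mul_assoc, ← ENNReal.ofReal_mul (by positivity)]
      _ ≤ v * ENNReal.ofReal (((N:ℝ) + 2) * Real.log (1 + L / R)) :=
          mul_le_mul_right (ENNReal.ofReal_le_ofReal hreal) v
  · -- R < L
    have hL0 : 0 < L := hR.trans hLR
    set c₁ : ℝ := L ^ (-(N:ℝ)) with hc₁def
    have hc₁ : 0 < c₁ := Real.rpow_pos_of_pos hL0 _
    have hc₁₂ : c₁ ≤ c₂ :=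
      Real.rpow_le_rpow_of_nonpos hR hLR.le (by simp [hNpos.le])
    rw [← Ioc_union_Ioc_eq_Ioc hc₁.le hc₁₂,
      lintegral_union measurableSet_Ioc (Set.Ioc_disjoint_Ioc_of_le le_rfl)]
    have hA : ∫⁻ t in Ioc 0 c₁, volume ({y | t < ‖x - y‖ ^ (-(N:ℝ))} ∩ S) ≤
        v * ENNReal.ofReal 1 := by
      calc ∫⁻ t in Ioc 0 c₁, volume ({y | t < ‖x - y‖ ^ (-(N:ℝ))} ∩ S)
          ≤ ∫⁻ _ in Ioc 0 c₁, v * ENNReal.ofReal (L ^ N) :=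
            lintegral_mono fun t => (measure_mono inter_subset_right).trans hvol
        _ = v * ENNReal.ofReal (L ^ N) * ENNReal.ofReal c₁ := by
            rw [setLIntegral_const, Real.volume_Ioc, sub_zero]
        _ = v * ENNReal.ofReal (L ^ N * c₁) := by
            rw [mul_assoc, ← ENNReal.ofReal_mul (by positivity)]
        _ = v * ENNReal.ofReal 1 := by
            rw [hc₁def, ← Real.rpow_natCast L N, ← Real.rpow_add hL0, add_neg_cancel,
              Real.rpow_zero]
    have hB : ∫⁻ t in Ioc c₁ c₂, volume ({y | t < ‖x - y‖ ^ (-(N:ℝ))} ∩ S) ≤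
        v * ENNReal.ofReal ((N:ℝ) * (Real.log L - Real.log R)) := by
      have hb : ∀ t ∈ Ioc c₁ c₂, volume ({y | t < ‖x - y‖ ^ (-(N:ℝ))} ∩ S) ≤
          ENNReal.ofReal t⁻¹ * v := by
        intro t ht
        have ht0 : 0 < t := hc₁.trans_le ht.1.le
        have hmt : volume ({y | t < ‖x - y‖ ^ (-(N:ℝ))} ∩ S) ≤
            ENNReal.ofReal (t ^ (-((N:ℝ)/(N:ℝ)))) * v :=
          (measure_mono inter_subset_left).trans (tail_meas x hNpos ht0)
        rwa [show -((N:ℝ)/(N:ℝ)) = -1 by rw [div_self hNpos.ne'],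
          Real.rpow_neg_one] at hmt
      have hint : IntegrableOn (fun t : ℝ => t⁻¹) (Ioc c₁ c₂) := by
        have hcont : ContinuousOn (fun t : ℝ => t⁻¹) (Icc c₁ c₂) :=
          continuousOn_id.inv₀ fun t ht => (hc₁.trans_le ht.1).ne'
        exact (hcont.integrableOn_Icc).mono_set Ioc_subset_Icc_self
      calc ∫⁻ t in Ioc c₁ c₂, volume ({y | t < ‖x - y‖ ^ (-(N:ℝ))} ∩ S)
          ≤ ∫⁻ t in Ioc c₁ c₂, ENNReal.ofReal t⁻¹ * v :=
            lintegral_mono_ae ((ae_restrict_iff' measurableSet_Ioc).2 (Eventually.of_forall hb))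
        _ = (∫⁻ t in Ioc c₁ c₂, ENNReal.ofReal t⁻¹) * v :=
            lintegral_mul_const' v _ hvne
        _ = ENNReal.ofReal (∫ t in Ioc c₁ c₂, t⁻¹) * v := by
            rw [ofReal_integral_eq_lintegral_ofReal hint
              ((ae_restrict_iff' measurableSet_Ioc).2 (Eventually.of_forall fun t ht =>
                (inv_nonneg).2 (hc₁.trans_le ht.1.le).le))]
        _ = ENNReal.ofReal ((N:ℝ) * (Real.log L - Real.log R)) * v := by
            congr 1
            rw [← intervalIntegral.integral_of_le hc₁₂, integral_inv_of_pos hc₁ hc₂]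
            rw [Real.log_div hc₂.ne' hc₁.ne', hc₂def, hc₁def, Real.log_rpow hR,
              Real.log_rpow hL0]
            ring
        _ = v * ENNReal.ofReal ((N:ℝ) * (Real.log L - Real.log R)) := mul_comm _ _
    have hlogsum : 0 ≤ Real.log L - Real.log R :=
      sub_nonneg.2 (Real.log_le_log hR hLR.le)
    have hreal : 1 + (N:ℝ) * (Real.log L - Real.log R) ≤
        ((N:ℝ) + 2) * Real.log (1 + L / R) := by
      have h1 : Real.log L - Real.log R ≤ Real.log (1 + L / R) := by
        rw [← Real.log_div hL0.ne' hR.ne']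
        exact Real.log_le_log (by positivity) (by
          have : 0 < L / R := div_pos hL0 hR
          linarith)
      have h2 : Real.log 2 ≤ Real.log (1 + L / R) := by
        apply Real.log_le_log (by norm_num)
        have : 1 < L / R := (one_lt_div hR).2 hLR
        linarith
      have h3 : (0.6931471803 : ℝ) < Real.log 2 := Real.log_two_gt_d9
      nlinarith [mul_le_mul_of_nonneg_left h1 hNpos.le]
    calc _ ≤ v * ENNReal.ofReal 1 + v * ENNReal.ofReal ((N:ℝ) * (Real.log L - Real.log R)) :=
          add_le_add hA hB
      _ = v * ENNReal.ofReal (1 + (N:ℝ) * (Real.log L - Real.log R)) := by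
          rw [← mul_add, ENNReal.ofReal_add (by norm_num) (by positivity)]
      _ ≤ v * ENNReal.ofReal (((N:ℝ) + 2) * Real.log (1 + L / R)) :=
          mul_le_mul_right (ENNReal.ofReal_le_ofReal hreal) v

set_option maxHeartbeats 1000000 in
theorem stmt_7 (N : ℕ) (hN : 1 ≤ N) (μ C₁ : ℝ)
    (hμ : μ ∈ Set.Ioo (0 : ℝ) 1) (hC₁ : 0 ≤ C₁) :
    ∃ C₀ : ℝ, 0 < C₀ ∧
      ∀ (K f ω : EuclideanSpace ℝ (Fin N) → ℝ) (Cf Mf Ω L : ℝ),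
        (∀ (c : ℝ) (x : EuclideanSpace ℝ (Fin N)), 0 < c → x ≠ 0 →
          K (c • x) = c ^ (-(N : ℝ)) * K x) →
        (∀ x, x ≠ 0 → |K x| ≤ C₁ * ‖x‖ ^ (-(N : ℝ))) →
        0 ≤ Cf → 0 ≤ Mf → 0 ≤ Ω → 0 ≤ L →
        (∀ x y, |f x - f y| ≤ Cf * ‖x - y‖ ^ μ) →
        (∀ x, |f x| ≤ Mf) →
        Measurable ω → (∀ x, |ω x| ≤ Ω) →
        volume (Function.support ω) =
          volume (Metric.ball (0 : EuclideanSpace ℝ (Fin N)) 1) * ENNReal.ofReal (L ^ N) →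
        ∀ R : ℝ, 0 < R → ∀ x,
          |∫ y, K (x - y) * (f x - f y) * ω y| ≤
            C₀ * Ω * (Cf * R ^ μ + Mf * Real.log (1 + L / R)) := by
  obtain ⟨hμ0, hμ1⟩ := hμ
  set v := volume (Metric.ball (0 : EuclideanSpace ℝ (Fin N)) 1) with hv
  have hvne : v ≠ ⊤ := measure_ball_lt_top.ne
  set vR : ℝ := v.toReal with hvR
  have hvR0 : 0 ≤ vR := ENNReal.toReal_nonneg
  have hN1 : (1:ℝ) ≤ (N:ℝ) := by exact_mod_cast hN
  have hNμ : 0 ≤ (N:ℝ)/μ := div_nonneg (by linarith) hμ0.le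
  have h2N2 : (0:ℝ) ≤ 2*((N:ℝ)+2) := by linarith
  refine ⟨(C₁+1) * vR * ((N:ℝ)/μ + 2*((N:ℝ)+2)) + 1, ?_, ?_⟩
  · have : 0 ≤ (C₁+1) * vR * ((N:ℝ)/μ + 2*((N:ℝ)+2)) :=
      mul_nonneg (mul_nonneg (by linarith) hvR0) (by linarith)
    linarith
  intro K f ω Cf Mf Ω L hKh hK hCf hMf hΩ hL hf hMfb hωm hωb hsupp R hR x
  set C₀ : ℝ := (C₁+1) * vR * ((N:ℝ)/μ + 2*((N:ℝ)+2)) + 1 with hC₀def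
  have hC₀ : 0 < C₀ := by
    have : 0 ≤ (C₁+1) * vR * ((N:ℝ)/μ + 2*((N:ℝ)+2)) :=
      mul_nonneg (mul_nonneg (by linarith) hvR0) (by linarith)
    simp only [hC₀def]; linarith
  have hlog : 0 ≤ Real.log (1 + L / R) := Real.log_nonneg (by
    have : 0 ≤ L / R := div_nonneg hL hR.le
    linarith)
  have hRμ : 0 ≤ R ^ μ := Real.rpow_nonneg hR.le μ
  have hRHS : 0 ≤ C₀ * Ω * (Cf * R ^ μ + Mf * Real.log (1 + L / R)) :=
    mul_nonneg (mul_nonneg hC₀.le hΩ)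
      (add_nonneg (mul_nonneg hCf hRμ) (mul_nonneg hMf hlog))
  rw [show |∫ y, K (x - y) * (f x - f y) * ω y| =
    ‖∫ y, K (x - y) * (f x - f y) * ω y‖ from (Real.norm_eq_abs _).symm]
  refine le_trans (norm_integral_le_lintegral_norm _) ?_
  refine ENNReal.toReal_le_of_le_ofReal hRHS ?_
  -- support set
  have hsuppm : MeasurableSet (Function.support ω) := by
    rw [Function.support_eq_preimage]
    exact (hωm (measurableSet_singleton 0)).compl
  set Sfar : Set (EuclideanSpace ℝ (Fin N)) := Function.support ω \ Metric.ball x R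
    with hSfar
  have hSfarm : MeasurableSet Sfar := hsuppm.diff measurableSet_ball
  set F₁ : EuclideanSpace ℝ (Fin N) → ENNReal := (Metric.ball x R).indicator
    (fun y => ENNReal.ofReal (C₁*Cf*Ω) * ENNReal.ofReal (‖x - y‖ ^ (μ - (N:ℝ)))) with hF₁
  set F₂ : EuclideanSpace ℝ (Fin N) → ENNReal := Sfar.indicator
    (fun y => ENNReal.ofReal (2*C₁*Mf*Ω) * ENNReal.ofReal (‖x - y‖ ^ (-(N:ℝ)))) with hF₂
  have hval1 : 0 ≤ C₁*Cf*Ω := mul_nonneg (mul_nonneg hC₁ hCf) hΩ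
  have hval2 : 0 ≤ 2*C₁*Mf*Ω := by
    have := mul_nonneg (mul_nonneg hC₁ hMf) hΩ
    linarith
  have hpt : ∀ y, ENNReal.ofReal ‖K (x - y) * (f x - f y) * ω y‖ ≤ F₁ y + F₂ y := by
    intro y
    rw [Real.norm_eq_abs, abs_mul, abs_mul]
    by_cases hyb : y ∈ Metric.ball x R
    · have hle : |K (x - y)| * |f x - f y| * |ω y| ≤ C₁*Cf*Ω * ‖x - y‖ ^ (μ - (N:ℝ)) := by
        by_cases hyx : y = x
        · rw [hyx]
          simp only [sub_self, abs_zero, mul_zero, zero_mul]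
          exact mul_nonneg hval1 (Real.rpow_nonneg (norm_nonneg _) _)
        · have hz : x - y ≠ 0 := sub_ne_zero.2 (Ne.symm hyx)
          have hzn : 0 < ‖x - y‖ := norm_pos_iff.2 hz
          have key : ‖x - y‖ ^ (-(N:ℝ)) * ‖x - y‖ ^ μ = ‖x - y‖ ^ (μ - (N:ℝ)) := by
            rw [← Real.rpow_add hzn, show -(N:ℝ) + μ = μ - (N:ℝ) by ring]
          have hK' := hK _ hz
          have hf' := hf x y
          have hω' := hωb y
          have b1 : 0 ≤ C₁ * ‖x - y‖ ^ (-(N:ℝ)) :=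
            mul_nonneg hC₁ (Real.rpow_nonneg (norm_nonneg _) _)
          have b2 : 0 ≤ Cf * ‖x - y‖ ^ μ :=
            mul_nonneg hCf (Real.rpow_nonneg (norm_nonneg _) _)
          calc |K (x - y)| * |f x - f y| * |ω y|
              ≤ (C₁ * ‖x - y‖ ^ (-(N:ℝ))) * (Cf * ‖x - y‖ ^ μ) * Ω :=
                mul_le_mul (mul_le_mul hK' hf' (abs_nonneg _) b1) hω' (abs_nonneg _)
                  (mul_nonneg b1 b2)
            _ = C₁*Cf*Ω * ‖x - y‖ ^ (μ - (N:ℝ)) := by rw [← key]; ring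
      refine le_trans ?_ (self_le_add_right (F₁ y) (F₂ y))
      rw [hF₁, indicator_of_mem hyb, ← ENNReal.ofReal_mul hval1]
      exact ENNReal.ofReal_le_ofReal hle
    · by_cases hωy : ω y = 0
      · simp [hωy]
      · have hyS : y ∈ Sfar := ⟨Function.mem_support.2 hωy, hyb⟩
        have hRy : R ≤ ‖x - y‖ := by
          rw [Metric.mem_ball, not_lt, dist_eq_norm] at hyb
          rwa [norm_sub_rev]
        have hz : x - y ≠ 0 := by
          intro h
          rw [h, norm_zero] at hRy
          linarith
        have hle : |K (x - y)| * |f x - f y| * |ω y| ≤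
            2*C₁*Mf*Ω * ‖x - y‖ ^ (-(N:ℝ)) := by
          have hfy : |f x - f y| ≤ 2*Mf := by
            have h0 := abs_sub (f x) (f y)
            have h1 := hMfb x
            have h2 := hMfb y
            linarith
          have b1 : 0 ≤ C₁ * ‖x - y‖ ^ (-(N:ℝ)) :=
            mul_nonneg hC₁ (Real.rpow_nonneg (norm_nonneg _) _)
          calc |K (x - y)| * |f x - f y| * |ω y|
              ≤ (C₁ * ‖x - y‖ ^ (-(N:ℝ))) * (2*Mf) * Ω :=
                mul_le_mul (mul_le_mul (hK _ hz) hfy (abs_nonneg _) b1) (hωb y)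
                  (abs_nonneg _) (mul_nonneg b1 (by linarith))
            _ = 2*C₁*Mf*Ω * ‖x - y‖ ^ (-(N:ℝ)) := by ring
        refine le_trans ?_ (self_le_add_left (F₂ y) (F₁ y))
        rw [hF₂, indicator_of_mem hyS, ← ENNReal.ofReal_mul hval2]
        exact ENNReal.ofReal_le_ofReal hle
  have hF₁meas : Measurable F₁ := by
    rw [hF₁]
    exact (measurable_const.mul
      (((measurable_const.sub measurable_id).norm.pow measurable_const).ennreal_ofReal)).indicator
      measurableSet_ball
  have hnear := near_bound hN hμ0 hμ1 hR x
  have hfarpt : ∀ y ∈ Sfar, R ≤ ‖x - y‖ := by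
    intro y hy
    have hyb := hy.2
    rw [Metric.mem_ball, not_lt, dist_eq_norm] at hyb
    rwa [norm_sub_rev]
  have hvolS : volume Sfar ≤ v * ENNReal.ofReal (L ^ N) := by
    rw [← hsupp]
    exact measure_mono diff_subset
  have hfar := far_bound hN hR hL x hSfarm hfarpt hvolS
  have h1 : C₁ * vR * ((N:ℝ)/μ) ≤ C₀ := by
    simp only [hC₀def]
    nlinarith [mul_nonneg hvR0 hNμ, mul_nonneg hvR0 h2N2,
      mul_nonneg (mul_nonneg hC₁ hvR0) h2N2]
  have h2 : 2*C₁*vR*((N:ℝ)+2) ≤ C₀ := by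
    simp only [hC₀def]
    nlinarith [mul_nonneg (mul_nonneg (by linarith : (0:ℝ) ≤ C₁+1) hvR0) hNμ,
      mul_nonneg hvR0 h2N2]
  have hfin : C₁*Cf*Ω * (vR * (((N:ℝ)/μ) * R ^ μ)) +
      2*C₁*Mf*Ω * (vR * (((N:ℝ)+2) * Real.log (1 + L / R))) ≤
      C₀ * Ω * (Cf * R ^ μ + Mf * Real.log (1 + L / R)) := by
    have e1 : C₁*Cf*Ω * (vR * (((N:ℝ)/μ) * R ^ μ)) =
        (C₁ * vR * ((N:ℝ)/μ)) * (Cf * R ^ μ * Ω) := by ring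
    have e2 : 2*C₁*Mf*Ω * (vR * (((N:ℝ)+2) * Real.log (1 + L / R))) =
        (2*C₁*vR*((N:ℝ)+2)) * (Mf * Real.log (1 + L / R) * Ω) := by ring
    rw [e1, e2]
    have g1 := mul_le_mul_of_nonneg_right h1 (mul_nonneg (mul_nonneg hCf hRμ) hΩ)
    have g2 := mul_le_mul_of_nonneg_right h2 (mul_nonneg (mul_nonneg hMf hlog) hΩ)
    calc (C₁ * vR * ((N:ℝ)/μ)) * (Cf * R ^ μ * Ω) +
        (2*C₁*vR*((N:ℝ)+2)) * (Mf * Real.log (1 + L / R) * Ω)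
        ≤ C₀ * (Cf * R ^ μ * Ω) + C₀ * (Mf * Real.log (1 + L / R) * Ω) := add_le_add g1 g2
      _ = C₀ * Ω * (Cf * R ^ μ + Mf * Real.log (1 + L / R)) := by ring
  have hveq : v = ENNReal.ofReal vR := (ENNReal.ofReal_toReal hvne).symm
  calc ∫⁻ y, ENNReal.ofReal ‖K (x - y) * (f x - f y) * ω y‖
      ≤ ∫⁻ y, (F₁ y + F₂ y) := lintegral_mono hpt
    _ = (∫⁻ y, F₁ y) + ∫⁻ y, F₂ y := lintegral_add_left hF₁meas _
    _ ≤ ENNReal.ofReal (C₁*Cf*Ω) * (v * ENNReal.ofReal (((N:ℝ)/μ) * R ^ μ)) +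
        ENNReal.ofReal (2*C₁*Mf*Ω) *
          (v * ENNReal.ofReal (((N:ℝ)+2) * Real.log (1 + L / R))) := by
        refine add_le_add ?_ ?_
        · rw [hF₁, lintegral_indicator measurableSet_ball,
            lintegral_const_mul' _ _ ENNReal.ofReal_ne_top]
          exact mul_le_mul_right hnear _
        · rw [hF₂, lintegral_indicator hSfarm,
            lintegral_const_mul' _ _ ENNReal.ofReal_ne_top]
          exact mul_le_mul_right hfar _
    _ = ENNReal.ofReal (C₁*Cf*Ω * (vR * (((N:ℝ)/μ) * R ^ μ)) +
        2*C₁*Mf*Ω * (vR * (((N:ℝ)+2) * Real.log (1 + L / R)))) := by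
        rw [hveq, ← ENNReal.ofReal_mul hvR0, ← ENNReal.ofReal_mul hval1,
          ← ENNReal.ofReal_mul hvR0, ← ENNReal.ofReal_mul hval2,
          ← ENNReal.ofReal_add (by positivity) (by positivity)]
    _ ≤ ENNReal.ofReal (C₀ * Ω * (Cf * R ^ μ + Mf * Real.log (1 + L / R))) :=
        ENNReal.ofReal_le_ofReal hfin
end

section
/- Geometric Lemma: let φ∈C^{1,μ}(ℝ²) with 0<μ<1, D={x:φ(x)>0} bounded, and inf{|∇φ(x)| : φ(x)=0} > 0. Set δ=(|∇φ|_inf/|∇φ|_μ)^{1/μ}. Fix x₀ with d(x₀)=dist(x₀,∂D)<δ, let x̃∈∂D attain the distance, Σ(x₀)={z∈S¹ : ∇φ(x̃)·z≥0}, and for ρ≥d(x₀) let S_ρ(x₀)={z∈S¹ : x₀+ρz∈D}. Then the symmetric difference R_ρ(x₀)=(S_ρ∖Σ)∪(Σ∖S_ρ) satisfies H¹(R_ρ(x₀)) ≤ 2π((1+2^μ)d(x₀)/ρ + 2^μ(ρ/δ)^μ) for all ρ≥d(x₀). -/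
open MeasureTheory Real Set Filter Topology
open scoped RealInnerProductSpace ENNReal

noncomputable def circParam (n : EuclideanSpace ℝ (Fin 2)) (θ : ℝ) : EuclideanSpace ℝ (Fin 2) :=
  (WithLp.equiv 2 (Fin 2 → ℝ)).symm ![Real.cos θ * n 0 - Real.sin θ * n 1,
    Real.sin θ * n 0 + Real.cos θ * n 1]

lemma circParam_apply0 (n : EuclideanSpace ℝ (Fin 2)) (θ : ℝ) :
    circParam n θ 0 = Real.cos θ * n 0 - Real.sin θ * n 1 := rfl

lemma circParam_apply1 (n : EuclideanSpace ℝ (Fin 2)) (θ : ℝ) :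
    circParam n θ 1 = Real.sin θ * n 0 + Real.cos θ * n 1 := rfl

lemma inner_two (x y : EuclideanSpace ℝ (Fin 2)) : ⟪x, y⟫ = x 0 * y 0 + x 1 * y 1 := by
  simp [PiLp.inner_apply, RCLike.inner_apply, Fin.sum_univ_two, mul_comm]

lemma norm_sq_two (x : EuclideanSpace ℝ (Fin 2)) : ‖x‖ ^ 2 = x 0 ^ 2 + x 1 ^ 2 := by
  rw [← real_inner_self_eq_norm_sq, inner_two]; ring

lemma circParam_lipschitz (n : EuclideanSpace ℝ (Fin 2)) (hn : ‖n‖ = 1) :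
    LipschitzWith 1 (circParam n) := by
  have hn2 : n 0 ^ 2 + n 1 ^ 2 = 1 := by
    rw [← norm_sq_two, hn]; norm_num
  apply LipschitzWith.of_dist_le_mul
  intro a b
  rw [NNReal.coe_one, one_mul, dist_eq_norm, Real.dist_eq]
  have h1 : ‖circParam n a - circParam n b‖ ^ 2 = 2 - 2 * Real.cos (a - b) := by
    rw [norm_sq_two]
    have e0 : (circParam n a - circParam n b) 0 =
        (Real.cos a - Real.cos b) * n 0 - (Real.sin a - Real.sin b) * n 1 := by
      simp [circParam_apply0]; ring
    have e1 : (circParam n a - circParam n b) 1 =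
        (Real.sin a - Real.sin b) * n 0 + (Real.cos a - Real.cos b) * n 1 := by
      simp [circParam_apply1]; ring
    rw [e0, e1]
    have hc := Real.cos_sub a b
    nlinarith [Real.sin_sq_add_cos_sq a, Real.sin_sq_add_cos_sq b]
  have h2 : 2 - 2 * Real.cos (a - b) ≤ (a - b) ^ 2 := by
    nlinarith [Real.one_sub_sq_div_two_le_cos (x := a - b)]
  have h3 : ‖circParam n a - circParam n b‖ ^ 2 ≤ |a - b| ^ 2 := by
    rw [h1, sq_abs]; linarith
  exact (pow_le_pow_iff_left₀ (norm_nonneg _) (abs_nonneg _) two_ne_zero).mp h3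

lemma inner_circParam (n : EuclideanSpace ℝ (Fin 2)) (hn : ‖n‖ = 1) (θ : ℝ) :
    ⟪n, circParam n θ⟫ = Real.cos θ := by
  have hn2 : n 0 ^ 2 + n 1 ^ 2 = 1 := by rw [← norm_sq_two, hn]; norm_num
  rw [inner_two, circParam_apply0, circParam_apply1]
  linear_combination Real.cos θ * hn2

lemma circParam_surj (n : EuclideanSpace ℝ (Fin 2)) (hn : ‖n‖ = 1)
    (z : EuclideanSpace ℝ (Fin 2)) (hz : ‖z‖ = 1) :
    ∃ θ ∈ Set.Icc (0:ℝ) (2 * π), circParam n θ = z := by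
  have hn2 : n 0 ^ 2 + n 1 ^ 2 = 1 := by rw [← norm_sq_two, hn]; norm_num
  have hz2 : z 0 ^ 2 + z 1 ^ 2 = 1 := by rw [← norm_sq_two, hz]; norm_num
  set a : ℝ := n 0 * z 0 + n 1 * z 1 with ha
  set b : ℝ := -(n 1) * z 0 + n 0 * z 1 with hb
  have hab : a ^ 2 + b ^ 2 = 1 := by rw [ha, hb]; nlinarith [hn2, hz2]
  have ha1 : -1 ≤ a := by nlinarith [sq_nonneg b]
  have ha2 : a ≤ 1 := by nlinarith [sq_nonneg b]
  have key : ∀ θ : ℝ, Real.cos θ = a → Real.sin θ = b → circParam n θ = z := by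
    intro θ h1 h2
    have e0 : circParam n θ 0 = z 0 := by
      rw [circParam_apply0, h1, h2, ha, hb]; linear_combination z 0 * hn2
    have e1 : circParam n θ 1 = z 1 := by
      rw [circParam_apply1, h1, h2, ha, hb]; linear_combination z 1 * hn2
    ext i
    fin_cases i
    · exact e0
    · exact e1
  rcases le_or_gt 0 b with hb0 | hb0
  · refine ⟨Real.arccos a, ⟨Real.arccos_nonneg a, ?_⟩, key _ (Real.cos_arccos ha1 ha2) ?_⟩
    · linarith [Real.arccos_le_pi a, Real.pi_pos]
    · rw [Real.sin_arccos]
      have : 1 - a ^ 2 = b ^ 2 := by linarith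
      rw [this, Real.sqrt_sq hb0]
  · refine ⟨2 * π - Real.arccos a, ⟨?_, ?_⟩, key _ ?_ ?_⟩
    · linarith [Real.arccos_le_pi a, Real.pi_pos]
    · linarith [Real.arccos_nonneg a]
    · rw [Real.cos_sub, Real.cos_two_pi, Real.sin_two_pi, Real.cos_arccos ha1 ha2]; ring
    · rw [Real.sin_sub, Real.cos_two_pi, Real.sin_two_pi, Real.sin_arccos]
      have : 1 - a ^ 2 = b ^ 2 := by linarith
      rw [this, Real.sqrt_sq_eq_abs, abs_of_neg hb0]; ring

lemma cover_lemma (A θ : ℝ) (hA : 0 ≤ A) (hθ : θ ∈ Set.Icc (0:ℝ) (2 * π))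
    (hc : |Real.cos θ| ≤ A) :
    θ ∈ Set.Icc (π/2 - π*A/2) (π/2 + π*A/2) ∪ Set.Icc (3*π/2 - π*A/2) (3*π/2 + π*A/2) := by
  obtain ⟨h0, h2⟩ := hθ
  have hπ := Real.pi_pos
  have jordan : ∀ u : ℝ, |u| ≤ π / 2 → |Real.sin u| ≤ A → |u| ≤ π * A / 2 := by
    intro u hu hs
    have habs : Real.sin |u| = |Real.sin u| := by
      rcases le_or_gt 0 u with h | h
      · rw [abs_of_nonneg h, abs_of_nonneg (Real.sin_nonneg_of_nonneg_of_le_pi h (by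
          rw [abs_of_nonneg h] at hu; linarith))]
      · rw [abs_of_neg h, Real.sin_neg, abs_of_nonpos
          (Real.sin_nonpos_of_nonpos_of_neg_pi_le h.le (by
            rw [abs_of_neg h] at hu; linarith))]
    have := Real.mul_le_sin (abs_nonneg u) hu
    rw [habs] at this
    have h2 : 2 / π * |u| ≤ A := this.trans hs
    rw [div_mul_eq_mul_div, div_le_iff₀ hπ] at h2  -- 2*|u|/π ≤ A
    linarith
  rcases le_total θ π with hle | hle
  · left
    have hu : |θ - π/2| ≤ π/2 := by rw [abs_le]; constructor <;> linarith
    have hcs : |Real.sin (θ - π/2)| ≤ A := by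
      have : Real.cos θ = -Real.sin (θ - π/2) := by
        rw [show θ = (θ - π/2) + π/2 by ring] at hc ⊢
        rw [Real.cos_add_pi_div_two]
        ring_nf
      rw [this, abs_neg] at hc
      exact hc
    have := jordan _ hu hcs
    rw [abs_le] at this
    constructor <;> linarith [this.1, this.2]
  · right
    have hu : |θ - 3*π/2| ≤ π/2 := by rw [abs_le]; constructor <;> linarith
    have hcs : |Real.sin (θ - 3*π/2)| ≤ A := by
      have : Real.cos θ = Real.sin (θ - 3*π/2) := by
        rw [show θ = ((θ - 3*π/2) + π/2) + π by ring, Real.cos_add_pi, Real.cos_add_pi_div_two]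
        ring_nf
      rw [this] at hc
      exact hc
    have := jordan _ hu hcs
    rw [abs_le] at this
    constructor <;> linarith [this.1, this.2]

lemma band_measure (n : EuclideanSpace ℝ (Fin 2)) (hn : ‖n‖ = 1) (A : ℝ) (hA : 0 ≤ A) :
    μH[1] {z : EuclideanSpace ℝ (Fin 2) |
      z ∈ Metric.sphere (0 : EuclideanSpace ℝ (Fin 2)) 1 ∧ |⟪n, z⟫| ≤ A} ≤
      ENNReal.ofReal (2 * π * A) := by
  set U : Set ℝ := Set.Icc (π/2 - π*A/2) (π/2 + π*A/2) ∪ Set.Icc (3*π/2 - π*A/2) (3*π/2 + π*A/2)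
    with hU
  have hsub : {z : EuclideanSpace ℝ (Fin 2) |
      z ∈ Metric.sphere (0 : EuclideanSpace ℝ (Fin 2)) 1 ∧ |⟪n, z⟫| ≤ A} ⊆ circParam n '' U := by
    rintro z ⟨hz, hzA⟩
    rw [mem_sphere_zero_iff_norm] at hz
    obtain ⟨θ, hθmem, hθ⟩ := circParam_surj n hn z hz
    refine ⟨θ, ?_, hθ⟩
    apply cover_lemma A θ hA hθmem
    rw [← hθ, inner_circParam n hn] at hzA
    exact hzA
  have himg : μH[1] (circParam n '' U) ≤ μH[1] U := by
    have h := (circParam_lipschitz n hn).hausdorffMeasure_image_le (d := 1) zero_le_one U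
    simpa using h
  have hπA : 0 ≤ π * A := mul_nonneg Real.pi_pos.le hA
  calc μH[1] {z : EuclideanSpace ℝ (Fin 2) |
        z ∈ Metric.sphere (0 : EuclideanSpace ℝ (Fin 2)) 1 ∧ |⟪n, z⟫| ≤ A}
      ≤ μH[1] (circParam n '' U) := measure_mono hsub
    _ ≤ μH[1] U := himg
    _ = volume U := by rw [MeasureTheory.hausdorffMeasure_real]
    _ ≤ volume (Set.Icc (π/2 - π*A/2) (π/2 + π*A/2)) +
        volume (Set.Icc (3*π/2 - π*A/2) (3*π/2 + π*A/2)) := measure_union_le _ _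
    _ ≤ ENNReal.ofReal (2 * π * A) := by
        rw [Real.volume_Icc, Real.volume_Icc,
          ← ENNReal.ofReal_add (by linarith) (by linarith)]
        apply ENNReal.ofReal_le_ofReal
        linarith


lemma taylor_bound (φ : EuclideanSpace ℝ (Fin 2) → ℝ) (hφ : ContDiff ℝ 1 φ) (Kμ μ : ℝ)
    (hμ : 0 < μ) (hKpos : 0 ≤ Kμ)
    (hHolder : ∀ x y, ‖gradient φ x - gradient φ y‖ ≤ Kμ * ‖x - y‖ ^ μ)
    (a x : EuclideanSpace ℝ (Fin 2)) :
    |φ x - φ a - ⟪gradient φ a, x - a⟫| ≤ Kμ * ‖x - a‖ ^ μ * ‖x - a‖ := by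
  set g := gradient φ a with hg
  have hdiff : Differentiable ℝ φ := hφ.differentiable one_ne_zero
  set s := segment ℝ a x with hs
  have hseg : ∀ y ∈ s, ‖y - a‖ ≤ ‖x - a‖ := by
    intro y hy
    rw [hs, segment_eq_image'] at hy
    obtain ⟨t, ht, rfl⟩ := hy
    rw [add_sub_cancel_left, norm_smul, Real.norm_eq_abs, abs_of_nonneg ht.1]
    nlinarith [norm_nonneg (x - a), ht.2]
  have hderiv : ∀ y ∈ s, HasFDerivWithinAt (fun y => φ y - ⟪g, y⟫)
      (fderiv ℝ φ y - innerSL ℝ g) s y := by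
    intro y _
    exact ((hdiff y).hasFDerivAt.sub ((innerSL ℝ g).hasFDerivAt)).hasFDerivWithinAt
  have hbound : ∀ y ∈ s, ‖fderiv ℝ φ y - innerSL ℝ g‖ ≤ Kμ * ‖x - a‖ ^ μ := by
    intro y hy
    have heq : fderiv ℝ φ y - innerSL ℝ g =
        InnerProductSpace.toDual ℝ (EuclideanSpace ℝ (Fin 2)) (gradient φ y - g) := by
      have h1 : InnerProductSpace.toDual ℝ (EuclideanSpace ℝ (Fin 2)) (gradient φ y) =
          fderiv ℝ φ y := by simp [gradient]
      have h2 : InnerProductSpace.toDual ℝ (EuclideanSpace ℝ (Fin 2)) g = innerSL ℝ g := by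
        ext w; simp [InnerProductSpace.toDual_apply_apply]
      rw [map_sub, h1, h2]
    rw [heq, LinearIsometryEquiv.norm_map]
    refine (hHolder y a).trans ?_
    exact mul_le_mul_of_nonneg_left
      (Real.rpow_le_rpow (norm_nonneg _) (hseg y hy) hμ.le) hKpos
  have key := (convex_segment a x).norm_image_sub_le_of_norm_hasFDerivWithin_le
    hderiv hbound (left_mem_segment ℝ a x) (right_mem_segment ℝ a x)
  rw [Real.norm_eq_abs] at key
  calc |φ x - φ a - ⟪g, x - a⟫|
      = |(φ x - ⟪g, x⟫) - (φ a - ⟪g, a⟫)| := by rw [inner_sub_right]; ring_nf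
    _ ≤ Kμ * ‖x - a‖ ^ μ * ‖x - a‖ := key

set_option maxHeartbeats 1000000 in
theorem stmt_12 (μ : ℝ) (hμ : μ ∈ Set.Ioo (0 : ℝ) 1)
    (φ : EuclideanSpace ℝ (Fin 2) → ℝ) (minf Kμ δ : ℝ)
    (hφ : ContDiff ℝ 1 φ)
    (hbdd : Bornology.IsBounded {x | 0 < φ x})
    (hminf : 0 < minf) (hKμ : 0 < Kμ)
    (hinf : ∀ x, φ x = 0 → minf ≤ ‖gradient φ x‖)
    (hHolder : ∀ x y, ‖gradient φ x - gradient φ y‖ ≤ Kμ * ‖x - y‖ ^ μ)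
    (hδ : δ = (minf / Kμ) ^ (1 / μ))
    (x₀ xt : EuclideanSpace ℝ (Fin 2))
    (hd : Metric.infDist x₀ (frontier {x | 0 < φ x}) < δ)
    (hxt : xt ∈ frontier {x | 0 < φ x})
    (hxtd : ‖xt - x₀‖ = Metric.infDist x₀ (frontier {x | 0 < φ x}))
    (ρ : ℝ) (hρpos : 0 < ρ)
    (hρ : Metric.infDist x₀ (frontier {x | 0 < φ x}) ≤ ρ) :
    μH[1] (({z ∈ Metric.sphere (0 : EuclideanSpace ℝ (Fin 2)) 1 | 0 < φ (x₀ + ρ • z)} \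
            {z ∈ Metric.sphere (0 : EuclideanSpace ℝ (Fin 2)) 1 | 0 ≤ ⟪gradient φ xt, z⟫}) ∪
           ({z ∈ Metric.sphere (0 : EuclideanSpace ℝ (Fin 2)) 1 | 0 ≤ ⟪gradient φ xt, z⟫} \
            {z ∈ Metric.sphere (0 : EuclideanSpace ℝ (Fin 2)) 1 | 0 < φ (x₀ + ρ • z)})) ≤
      ENNReal.ofReal (2 * π * ((1 + 2 ^ μ) * Metric.infDist x₀ (frontier {x | 0 < φ x}) / ρ +
        2 ^ μ * (ρ / δ) ^ μ)) := by
  obtain ⟨hμ0, hμ1⟩ := hμ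
  set d := Metric.infDist x₀ (frontier {x | 0 < φ x}) with hdd
  set g := gradient φ xt with hg
  set A := (1 + 2 ^ μ) * d / ρ + 2 ^ μ * (ρ / δ) ^ μ with hA
  have hd0 : 0 ≤ d := Metric.infDist_nonneg
  have hδpos : 0 < δ := by
    rw [hδ]; exact Real.rpow_pos_of_pos (div_pos hminf hKμ) _
  have hδμ : δ ^ μ = minf / Kμ := by
    rw [hδ, ← Real.rpow_mul (div_pos hminf hKμ).le, one_div_mul_cancel hμ0.ne', Real.rpow_one]
  have hP1 : (1:ℝ) ≤ 2 ^ μ := by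
    have := Real.rpow_le_rpow_of_exponent_le (one_le_two) hμ0.le (y := 0) (z := μ)
    simpa using this
  have hP0 : (0:ℝ) < 2 ^ μ := lt_of_lt_of_le one_pos hP1
  have hRat0 : (0:ℝ) ≤ (ρ / δ) ^ μ := Real.rpow_nonneg (by positivity) μ
  have hA0 : 0 ≤ A := by
    rw [hA]
    exact add_nonneg (div_nonneg (mul_nonneg (by positivity) hd0) hρpos.le)
      (mul_nonneg hP0.le hRat0)
  -- φ xt = 0
  have hopen : IsOpen {x | 0 < φ x} := isOpen_lt continuous_const hφ.continuous
  have hφxt : φ xt = 0 := by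
    have h1 : xt ∉ {x | 0 < φ x} := by
      rw [hopen.frontier_eq] at hxt
      exact hxt.2
    have h2 : xt ∈ closure {x | 0 < φ x} := hxt.1
    have h3 : closure {x | 0 < φ x} ⊆ {x | 0 ≤ φ x} :=
      closure_minimal (fun x hx => show (0:ℝ) ≤ φ x from le_of_lt hx) (isClosed_le continuous_const hφ.continuous)
    have := h3 h2
    simp only [Set.mem_setOf_eq] at this h1
    push_neg at h1
    linarith
  have hgnorm : minf ≤ ‖g‖ := hinf xt hφxt
  have hgpos : 0 < ‖g‖ := lt_of_lt_of_le hminf hgnorm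
  have hgne : g ≠ 0 := by intro h; rw [h, norm_zero] at hgpos; exact lt_irrefl 0 hgpos
  set n : EuclideanSpace ℝ (Fin 2) := ‖g‖⁻¹ • g with hn
  have hnnorm : ‖n‖ = 1 := norm_smul_inv_norm (𝕜 := ℝ) hgne
  -- the key pointwise estimate
  have hmain : ∀ z : EuclideanSpace ℝ (Fin 2), ‖z‖ = 1 → |⟪g, z⟫| > A * ‖g‖ →
      A < 1 → ((A * ‖g‖ < ⟪g, z⟫ → 0 < φ (x₀ + ρ • z)) ∧
        (⟪g, z⟫ < -(A * ‖g‖) → φ (x₀ + ρ • z) < 0)) := by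
    intro z hznorm _ hA1
    set x := x₀ + ρ • z with hx
    have hxxt : ‖x - xt‖ ≤ d + ρ := by
      have : x - xt = (x₀ - xt) + ρ • z := by rw [hx]; abel
      rw [this]
      calc ‖(x₀ - xt) + ρ • z‖ ≤ ‖x₀ - xt‖ + ‖ρ • z‖ := norm_add_le _ _
        _ = d + ρ := by
            rw [norm_smul, Real.norm_eq_abs, abs_of_pos hρpos, hznorm, mul_one,
              norm_sub_rev, hxtd]
    have h2ρ : d + ρ ≤ 2 * ρ := by linarith
    have htay : |φ x - ⟪g, x - xt⟫| ≤ Kμ * (2*ρ) ^ μ * (d + ρ) := by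
      have h0 := taylor_bound φ hφ Kμ μ hμ0 hKμ.le hHolder xt x
      rw [hφxt, sub_zero] at h0
      refine h0.trans ?_
      have hm1 : ‖x - xt‖ ^ μ ≤ (2*ρ) ^ μ :=
        Real.rpow_le_rpow (norm_nonneg _) (hxxt.trans h2ρ) hμ0.le
      exact mul_le_mul (mul_le_mul_of_nonneg_left hm1 hKμ.le) hxxt (norm_nonneg _)
        (mul_nonneg hKμ.le (Real.rpow_nonneg (by positivity) μ))
    have hinner : ⟪g, x - xt⟫ = ⟪g, x₀ - xt⟫ + ρ * ⟪g, z⟫ := by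
      have : x - xt = (x₀ - xt) + ρ • z := by rw [hx]; abel
      rw [this, inner_add_right, real_inner_smul_right]
    have hb : |⟪g, x₀ - xt⟫| ≤ ‖g‖ * d := by
      refine (abs_real_inner_le_norm _ _).trans ?_
      rw [norm_sub_rev, hxtd]
    -- the key arithmetic bound
    have hkey : ‖g‖ * d + Kμ * (2*ρ) ^ μ * (d + ρ) ≤ ρ * (A * ‖g‖) := by
      have h2ρμ : (2*ρ) ^ μ = 2 ^ μ * ρ ^ μ := Real.mul_rpow (by norm_num) hρpos.le
      have hρδ : (ρ/δ) ^ μ = ρ ^ μ / δ ^ μ := Real.div_rpow hρpos.le hδpos.le μ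
      have hδμpos : 0 < δ ^ μ := Real.rpow_pos_of_pos hδpos μ
      have hρμ0 : 0 ≤ ρ ^ μ := Real.rpow_nonneg hρpos.le μ
      have hKδ : Kμ * δ ^ μ = minf := by rw [hδμ]; field_simp
      have hratio : ρ ^ μ / δ ^ μ ≤ 1 := by
        rw [← hρδ]
        by_contra hcon
        push_neg at hcon
        have hd' : (0:ℝ) ≤ (1 + 2 ^ μ) * d / ρ :=
          div_nonneg (mul_nonneg (by positivity) hd0) hρpos.le
        have h2 : 2 ^ μ * (ρ / δ) ^ μ ≤ A := by rw [hA]; linarith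
        have h3 : (1:ℝ) * 1 ≤ 2 ^ μ * (ρ / δ) ^ μ :=
          mul_le_mul hP1 hcon.le zero_le_one hP0.le
        rw [one_mul] at h3
        exact absurd (h3.trans h2) (not_le.mpr hA1)
      have hK' : Kμ * ρ ^ μ ≤ ‖g‖ * (ρ ^ μ / δ ^ μ) := by
        have h1 : Kμ * ρ ^ μ * δ ^ μ ≤ ‖g‖ * ρ ^ μ := by
          nlinarith [mul_le_mul_of_nonneg_right hgnorm hρμ0]
        calc Kμ * ρ ^ μ = (Kμ * ρ ^ μ * δ ^ μ) / δ ^ μ := by field_simp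
          _ ≤ (‖g‖ * ρ ^ μ) / δ ^ μ := (div_le_div_iff_of_pos_right hδμpos).mpr h1
          _ = ‖g‖ * (ρ ^ μ / δ ^ μ) := by ring
      have hρA : ρ * A = (1 + 2 ^ μ) * d + 2 ^ μ * (ρ ^ μ / δ ^ μ) * ρ := by
        rw [hA, hρδ]
        field_simp
      have expand : ρ * (A * ‖g‖) =
          (1 + 2 ^ μ) * d * ‖g‖ + 2 ^ μ * (ρ ^ μ / δ ^ μ) * ρ * ‖g‖ := by
        rw [← mul_assoc, hρA]; ring
      rw [expand, h2ρμ]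
      have hstep1 : Kμ * (2 ^ μ * ρ ^ μ) * (d + ρ) ≤
          2 ^ μ * (‖g‖ * (ρ ^ μ / δ ^ μ)) * (d + ρ) := by
        have h := mul_le_mul_of_nonneg_right (mul_le_mul_of_nonneg_left hK' hP0.le)
          (by linarith : (0:ℝ) ≤ d + ρ)
        nlinarith [h]
      have hstep2 : 2 ^ μ * (‖g‖ * (ρ ^ μ / δ ^ μ)) * d ≤ 2 ^ μ * ‖g‖ * d := by
        have h1 : ‖g‖ * (ρ ^ μ / δ ^ μ) ≤ ‖g‖ := by
          nlinarith [div_nonneg hρμ0 hδμpos.le]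
        nlinarith [mul_le_mul_of_nonneg_right h1 hd0, hP0.le]
      nlinarith [hstep1, hstep2]
    constructor
    · intro hgt
      have h1 : φ x ≥ ⟪g, x - xt⟫ - (Kμ * (2*ρ) ^ μ * (d + ρ)) := by
        have := abs_le.mp htay
        linarith [this.1]
      have h2 : ⟪g, x - xt⟫ ≥ -( ‖g‖ * d) + ρ * ⟪g, z⟫ := by
        rw [hinner]
        have := abs_le.mp hb
        linarith [this.1]
      have h3 : ρ * (A * ‖g‖) < ρ * ⟪g, z⟫ := by
        exact mul_lt_mul_of_pos_left hgt hρpos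
      linarith
    · intro hlt
      have h1 : φ x ≤ ⟪g, x - xt⟫ + (Kμ * (2*ρ) ^ μ * (d + ρ)) := by
        have := abs_le.mp htay
        linarith [this.2]
      have h2 : ⟪g, x - xt⟫ ≤ ‖g‖ * d + ρ * ⟪g, z⟫ := by
        rw [hinner]
        have := abs_le.mp hb
        linarith [this.2]
      have h3 : ρ * ⟪g, z⟫ < ρ * (-(A * ‖g‖)) := mul_lt_mul_of_pos_left hlt hρpos
      linarith
  -- inclusion into the band
  have hincl : (({z ∈ Metric.sphere (0 : EuclideanSpace ℝ (Fin 2)) 1 | 0 < φ (x₀ + ρ • z)} \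
            {z ∈ Metric.sphere (0 : EuclideanSpace ℝ (Fin 2)) 1 | 0 ≤ ⟪g, z⟫}) ∪
           ({z ∈ Metric.sphere (0 : EuclideanSpace ℝ (Fin 2)) 1 | 0 ≤ ⟪g, z⟫} \
            {z ∈ Metric.sphere (0 : EuclideanSpace ℝ (Fin 2)) 1 | 0 < φ (x₀ + ρ • z)})) ⊆
      {z : EuclideanSpace ℝ (Fin 2) |
        z ∈ Metric.sphere (0 : EuclideanSpace ℝ (Fin 2)) 1 ∧ |⟪n, z⟫| ≤ A} := by
    intro z hz
    simp only [Set.mem_union, Set.mem_diff, Set.mem_sep_iff, not_and, not_le, not_lt] at hz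
    have hzs : z ∈ Metric.sphere (0 : EuclideanSpace ℝ (Fin 2)) 1 := by
      rcases hz with h | h
      · exact h.1.1
      · exact h.1.1
    have hznorm : ‖z‖ = 1 := mem_sphere_zero_iff_norm.mp hzs
    refine ⟨hzs, ?_⟩
    have hinner_n : ⟪n, z⟫ = ‖g‖⁻¹ * ⟪g, z⟫ := by
      rw [hn, real_inner_smul_left]
    have hAg : 0 ≤ A * ‖g‖ := mul_nonneg hA0 hgpos.le
    have hsuff : |⟪g, z⟫| ≤ A * ‖g‖ := by
      rcases le_or_gt 1 A with hA1 | hA1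
      · calc |⟪g, z⟫| ≤ ‖g‖ * ‖z‖ := abs_real_inner_le_norm g z
          _ = ‖g‖ := by rw [hznorm, mul_one]
          _ ≤ A * ‖g‖ := le_mul_of_one_le_left hgpos.le hA1
      · by_contra hcon
        push_neg at hcon
        have hmz := hmain z hznorm hcon hA1
        rcases lt_or_ge (A * ‖g‖) ⟪g, z⟫ with hgt | hle
        · have hφpos := hmz.1 hgt
          have hinn : (0:ℝ) ≤ ⟪g, z⟫ := le_of_lt (lt_of_le_of_lt hAg hgt)
          rcases hz with h | h
          · exact absurd hinn (not_le.mpr (h.2 hzs))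
          · exact absurd hφpos (not_lt.mpr (h.2 hzs))
        · have hlt : ⟪g, z⟫ < -(A * ‖g‖) := by
            by_contra hge
            push_neg at hge
            exact absurd (abs_le.mpr ⟨hge, hle⟩) (not_le.mpr hcon)
          have hφneg := hmz.2 hlt
          rcases hz with h | h
          · exact absurd h.1.2 (not_lt.mpr hφneg.le)
          · exact absurd h.1.2 (not_le.mpr (by linarith))
    rw [hinner_n, abs_mul, abs_inv, abs_of_pos hgpos]
    calc ‖g‖⁻¹ * |⟪g, z⟫| ≤ ‖g‖⁻¹ * (A * ‖g‖) :=
          mul_le_mul_of_nonneg_left hsuff (inv_nonneg.mpr hgpos.le)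
      _ = A := by field_simp
  calc μH[1] _ ≤ μH[1] {z : EuclideanSpace ℝ (Fin 2) |
        z ∈ Metric.sphere (0 : EuclideanSpace ℝ (Fin 2)) 1 ∧ |⟪n, z⟫| ≤ A} :=
        measure_mono hincl
    _ ≤ ENNReal.ofReal (2 * π * A) := band_measure n hnnorm A hA0
end

section
/- Let v:ℝ²×ℝ→ℝ² be smooth, let X be its flow, and let W be a vector field satisfying W(X(α,t),t)=∇_αX(α,t)W₀(α) for all α,t. Assume the chain of regularity needed for all expressions to be C¹. Then for every j≥0, d/dt [(W·∇)^j W](X(α,t),t) = [(W·∇)^{j+1} v](X(α,t),t). -/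
open MeasureTheory Real Set Filter Topology

/-- `WdIter W u m = (W · ∇)^m u`, with `(W · ∇)^0 u = u`. -/
noncomputable def WdIter (Wf u : EuclideanSpace ℝ (Fin 2) → EuclideanSpace ℝ (Fin 2)) :
    ℕ → EuclideanSpace ℝ (Fin 2) → EuclideanSpace ℝ (Fin 2)
  | 0 => u
  | m + 1 => fun x => fderiv ℝ (WdIter Wf u m) x (Wf x)

local notation "E2" => EuclideanSpace ℝ (Fin 2)

/-- Iterated Lagrangian derivative `(W₀ · ∇_α)^j f`. -/
noncomputable def pullIter (W₀ : E2 → E2) (f : ℝ → E2 → E2) :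
    ℕ → ℝ → E2 → E2
  | 0 => f
  | j + 1 => fun t α => fderiv ℝ (pullIter W₀ f j t) α (W₀ α)

/-- Schwarz swap: for jointly smooth `F`, the time derivative of the space
derivative is the space derivative of the time derivative. -/
lemma swap_lemma (F : ℝ → E2 → E2)
    (hF : ContDiff ℝ (⊤ : ℕ∞) fun p : ℝ × E2 => F p.1 p.2) (t : ℝ) (α w : E2) :
    HasDerivAt (fun s => fderiv ℝ (F s) α w)
      (fderiv ℝ (fun β => deriv (fun s => F s β) t) α w) t := by
  set Φ : ℝ × E2 → E2 := fun p => F p.1 p.2 with hΦ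
  have hΦd : Differentiable ℝ Φ := hF.differentiable (by simp)
  have hΦ' : ContDiff ℝ (⊤ : ℕ∞) (fderiv ℝ Φ) := hF.fderiv_right (by simp)
  set D2 := fderiv ℝ (fderiv ℝ Φ) (t, α) with hD2def
  have hD2 : HasFDerivAt (fderiv ℝ Φ) D2 (t, α) :=
    ((hΦ'.differentiable (by simp)) (t, α)).hasFDerivAt
  -- partial space derivative in terms of the full derivative
  have h1 : ∀ s (β : E2), fderiv ℝ (F s) β =
      (fderiv ℝ Φ (s, β)).comp (ContinuousLinearMap.inr ℝ ℝ E2) := by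
    intro s β
    have hcurve : HasFDerivAt (fun β : E2 => ((s, β) : ℝ × E2))
        (ContinuousLinearMap.inr ℝ ℝ E2) β := (hasFDerivAt_prodMk_right s β)
    have := ((hΦd (s, β)).hasFDerivAt).comp β hcurve
    exact this.fderiv
  -- partial time derivative in terms of the full derivative
  have h2 : ∀ (β : E2), deriv (fun s => F s β) t =
      fderiv ℝ Φ (t, β) ((1 : ℝ), (0 : E2)) := by
    intro β
    have hcurve : HasDerivAt (fun s : ℝ => ((s, β) : ℝ × E2)) ((1 : ℝ), (0 : E2)) t :=
      (hasDerivAt_id t).prodMk (hasDerivAt_const t β)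
    have := ((hΦd (t, β)).hasFDerivAt).comp_hasDerivAt t hcurve
    exact this.deriv
  -- LHS: time derivative of s ↦ fderiv Φ (s,α) (0,w)
  have hfun : (fun s => fderiv ℝ (F s) α w) =
      fun s => fderiv ℝ Φ (s, α) ((0 : ℝ), w) := by
    funext s; rw [h1]; rfl
  have hcurve : HasDerivAt (fun s : ℝ => ((s, α) : ℝ × E2)) ((1 : ℝ), (0 : E2)) t :=
    (hasDerivAt_id t).prodMk (hasDerivAt_const t α)
  have hL : HasDerivAt (fun s => fderiv ℝ Φ (s, α)) (D2 ((1 : ℝ), (0 : E2))) t :=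
    hD2.comp_hasDerivAt t hcurve
  have hLw : HasDerivAt (fun s => fderiv ℝ Φ (s, α) ((0 : ℝ), w))
      (D2 ((1 : ℝ), (0 : E2)) ((0 : ℝ), w)) t := by
    have := hL.clm_apply (hasDerivAt_const t ((0 : ℝ), w))
    simpa using this
  -- RHS value computation
  have hR : fderiv ℝ (fun β => deriv (fun s => F s β) t) α w =
      D2 ((0 : ℝ), w) ((1 : ℝ), (0 : E2)) := by
    have hfun2 : (fun β : E2 => deriv (fun s => F s β) t) =
        fun β => fderiv ℝ Φ (t, β) ((1 : ℝ), (0 : E2)) := by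
      funext β; exact h2 β
    rw [hfun2]
    have hcurve2 : HasFDerivAt (fun β : E2 => ((t, β) : ℝ × E2))
        (ContinuousLinearMap.inr ℝ ℝ E2) α := hasFDerivAt_prodMk_right t α
    have hin : HasFDerivAt (fun β : E2 => fderiv ℝ Φ (t, β))
        (D2.comp (ContinuousLinearMap.inr ℝ ℝ E2)) α := hD2.comp α hcurve2
    have hev : HasFDerivAt (fun β : E2 => fderiv ℝ Φ (t, β) ((1 : ℝ), (0 : E2)))
        ((ContinuousLinearMap.apply ℝ E2 ((1 : ℝ), (0 : E2))).comp
          (D2.comp (ContinuousLinearMap.inr ℝ ℝ E2))) α :=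
      (ContinuousLinearMap.apply ℝ E2 ((1 : ℝ), (0 : E2))).hasFDerivAt.comp α hin
    rw [hev.fderiv]; rfl
  -- Schwarz symmetry
  have hsymm : D2 ((1 : ℝ), (0 : E2)) ((0 : ℝ), w) = D2 ((0 : ℝ), w) ((1 : ℝ), (0 : E2)) :=
    (hF.contDiffAt.isSymmSndFDerivAt (by rw [minSmoothness_of_isRCLikeNormedField]; exact WithTop.coe_le_coe.mpr le_top)) _ _
  rw [hfun, hR, ← hsymm]
  exact hLw

section main

variable (v W X : ℝ → E2 → E2) (W₀ : E2 → E2)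

/-- Joint smoothness of `(W·∇)^j u`. -/
lemma smooth_Wd (u : ℝ → E2 → E2)
    (hWs : ContDiff ℝ (⊤ : ℕ∞) fun p : ℝ × E2 => W p.1 p.2)
    (hu : ContDiff ℝ (⊤ : ℕ∞) fun p : ℝ × E2 => u p.1 p.2) (j : ℕ) :
    ContDiff ℝ (⊤ : ℕ∞) fun p : ℝ × E2 => WdIter (W p.1) (u p.1) j p.2 := by
  induction j with
  | zero => exact hu
  | succ j ih =>
    show ContDiff ℝ (⊤ : ℕ∞) fun p : ℝ × E2 =>
      fderiv ℝ (WdIter (W p.1) (u p.1) j) p.2 (W p.1 p.2)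
    exact ContDiff.fderiv_apply
      (f := fun (p : ℝ × E2) (x : E2) => WdIter (W p.1) (u p.1) j x)
      (g := Prod.snd) (k := fun p : ℝ × E2 => W p.1 p.2)
      (ih.comp ((contDiff_fst.fst).prodMk contDiff_snd)) contDiff_snd hWs (by simp)

lemma smooth_pull (f : ℝ → E2 → E2) (hW₀ : ContDiff ℝ (⊤ : ℕ∞) W₀)
    (hf : ContDiff ℝ (⊤ : ℕ∞) fun p : ℝ × E2 => f p.1 p.2) (j : ℕ) :
    ContDiff ℝ (⊤ : ℕ∞) fun p : ℝ × E2 => pullIter W₀ f j p.1 p.2 := by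
  induction j with
  | zero => exact hf
  | succ j ih =>
    show ContDiff ℝ (⊤ : ℕ∞) fun p : ℝ × E2 =>
      fderiv ℝ (pullIter W₀ f j p.1) p.2 (W₀ p.2)
    exact ContDiff.fderiv_apply
      (f := fun (p : ℝ × E2) (x : E2) => pullIter W₀ f j p.1 x)
      (g := Prod.snd) (k := fun p : ℝ × E2 => W₀ p.2)
      (ih.comp ((contDiff_fst.fst).prodMk contDiff_snd)) contDiff_snd
      (hW₀.comp contDiff_snd) (by simp)

/-- Transfer from Eulerian iterated derivatives to Lagrangian ones. -/
lemma transfer (u : ℝ → E2 → E2)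
    (hX : ContDiff ℝ (⊤ : ℕ∞) fun p : ℝ × E2 => X p.1 p.2)
    (hWs : ContDiff ℝ (⊤ : ℕ∞) fun p : ℝ × E2 => W p.1 p.2)
    (hu : ContDiff ℝ (⊤ : ℕ∞) fun p : ℝ × E2 => u p.1 p.2)
    (htrans : ∀ α t, W t (X t α) = fderiv ℝ (X t) α (W₀ α)) (j : ℕ) :
    ∀ t α, WdIter (W t) (u t) j (X t α) =
      pullIter W₀ (fun t α => u t (X t α)) j t α := by
  induction j with
  | zero => intro t α; rfl
  | succ j ih =>
    intro t α
    have hXt : ContDiff ℝ (⊤ : ℕ∞) (X t) := hX.comp (contDiff_const.prodMk contDiff_id)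
    have hg : ContDiff ℝ (⊤ : ℕ∞) (WdIter (W t) (u t) j) :=
      (smooth_Wd W u hWs hu j).comp (contDiff_const.prodMk contDiff_id)
    show fderiv ℝ (WdIter (W t) (u t) j) (X t α) (W t (X t α)) = _
    rw [htrans α t]
    have hc := fderiv_comp α ((hg.differentiable (by simp)) (X t α))
      ((hXt.differentiable (by simp)) α)
    have h1 : (fderiv ℝ (WdIter (W t) (u t) j) (X t α)) ((fderiv ℝ (X t) α) (W₀ α)) =
        fderiv ℝ ((WdIter (W t) (u t) j) ∘ (X t)) α (W₀ α) := by rw [hc]; rfl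
    have h2 : (WdIter (W t) (u t) j) ∘ (X t) =
        pullIter W₀ (fun t α => u t (X t α)) j t := by
      funext β; exact ih t β
    rw [h1, h2]; rfl

end main

theorem stmt_19
    (v W X : ℝ → EuclideanSpace ℝ (Fin 2) → EuclideanSpace ℝ (Fin 2))
    (W₀ : EuclideanSpace ℝ (Fin 2) → EuclideanSpace ℝ (Fin 2))
    (hv : ContDiff ℝ (⊤ : ℕ∞) fun p : ℝ × EuclideanSpace ℝ (Fin 2) => v p.1 p.2)
    (hX : ContDiff ℝ (⊤ : ℕ∞) fun p : ℝ × EuclideanSpace ℝ (Fin 2) => X p.1 p.2)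
    (hWs : ContDiff ℝ (⊤ : ℕ∞) fun p : ℝ × EuclideanSpace ℝ (Fin 2) => W p.1 p.2)
    (hW₀ : ContDiff ℝ (⊤ : ℕ∞) W₀)
    (hX0 : ∀ α, X 0 α = α)
    (hflow : ∀ α t, HasDerivAt (fun s => X s α) (v t (X t α)) t)
    (htrans : ∀ α t, W t (X t α) = fderiv ℝ (X t) α (W₀ α)) :
    ∀ (j : ℕ) (α : EuclideanSpace ℝ (Fin 2)) (t : ℝ),
      HasDerivAt (fun s => WdIter (W s) (W s) j (X s α))
        (WdIter (W t) (v t) (j + 1) (X t α)) t := by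
  set fW : ℝ → E2 → E2 := fun t α => W t (X t α) with hfW
  set fv : ℝ → E2 → E2 := fun t α => v t (X t α) with hfv
  have hfWs : ContDiff ℝ (⊤ : ℕ∞) fun p : ℝ × E2 => fW p.1 p.2 :=
    hWs.comp (contDiff_fst.prodMk hX)
  have hfvs : ContDiff ℝ (⊤ : ℕ∞) fun p : ℝ × E2 => fv p.1 p.2 :=
    hv.comp (contDiff_fst.prodMk hX)
  -- key Lagrangian statement, by induction on j
  have key : ∀ (j : ℕ) (α : E2) (t : ℝ),
      HasDerivAt (fun s => pullIter W₀ fW j s α) (pullIter W₀ fv (j + 1) t α) t := by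
    intro j
    induction j with
    | zero =>
      intro α t
      have hfun : (fun s => pullIter W₀ fW 0 s α) =
          fun s => fderiv ℝ (X s) α (W₀ α) := by
        funext s; exact htrans α s
      have hsw := swap_lemma X hX t α (W₀ α)
      have hval : (fun β : E2 => deriv (fun s => X s β) t) = fun β => v t (X t β) := by
        funext β; exact (hflow β t).deriv
      rw [hval] at hsw
      rw [hfun]
      exact hsw
    | succ j ih =>
      intro α t
      have hsw := swap_lemma (fun t α => pullIter W₀ fW j t α)
        (smooth_pull W₀ fW hW₀ hfWs j) t α (W₀ α)
      have hval : (fun β : E2 => deriv (fun s => pullIter W₀ fW j s β) t) =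
          fun β => pullIter W₀ fv (j + 1) t β := by
        funext β; exact (ih β t).deriv
      rw [hval] at hsw
      exact hsw
  intro j α t
  have hW' := transfer W X W₀ W hX hWs hWs htrans j
  have hv' := transfer W X W₀ v hX hWs hv htrans (j + 1)
  have hfun : (fun s => WdIter (W s) (W s) j (X s α)) =
      fun s => pullIter W₀ fW j s α := by
    funext s; exact hW' s α
  rw [hfun, hv' t α]
  exact key j α t
end
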